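/- For every positive integer n, the number of overpartitions π of n with mex̄(π) = m equals the coefficient of z^m q^n in Σ_{m≥1} z^m q^{m(m−1)/2} (1 − q^m) · (−q;q)_∞/(q;q)_∞; in particular, Σ_m m · #{π ∈ overpartitions of n : mex̄(π) = m} = σmex̄(n) has generating function (−q;q)_∞/(q;q)_∞ · Σ_{m≥1} m q^{m(m−1)/2}(1 − q^m). -/

import Mathlib

noncomputable instance : TopologicalSpace (PowerSeries ℤ) :=
  inferInstanceAs (TopologicalSpace ((Unit →₀ ℕ) → ℤ))
noncomputable instance : TopologicalSpace (PowerSeries ℚ) :=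
  inferInstanceAs (TopologicalSpace ((Unit →₀ ℕ) → ℚ))

/-- An overpartition of `n`: a multiset of non-overlined positive parts together with a
finite set of overlined positive parts (at most one overlined copy per part size). -/
structure Overpartition (n : ℕ) where
  parts : Multiset ℕ              -- non-overlined parts
  overlined : Finset ℕ            -- overlined parts (distinct sizes)
  parts_pos : ∀ i ∈ parts, 0 < i
  overlined_pos : ∀ i ∈ overlined, 0 < i
  sum_eq : parts.sum + ∑ i ∈ overlined, i = n

/-- Minimal excludant of an overpartition: the least positive integer not among
the non-overlined parts. -/
noncomputable def Overpartition.mex {n : ℕ} (π : Overpartition n) : ℕ :=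
  sInf {m : ℕ | 0 < m ∧ m ∉ π.parts}

/-- Least `r`-gap: the least positive integer occurring fewer than `r` times among
the non-overlined parts. -/
noncomputable def Overpartition.rgap {n : ℕ} (r : ℕ) (π : Overpartition n) : ℕ :=
  sInf {m : ℕ | 0 < m ∧ π.parts.count m < r}

/-- `σmex̄(n)`: sum of minimal excludants over all overpartitions of `n`. -/
noncomputable def sigmaMex (n : ℕ) : ℕ := ∑ᶠ π : Overpartition n, π.mex

/-- `σ_r mex̄(n)`: sum of least `r`-gaps over all overpartitions of `n`. -/
noncomputable def sigmaRMex (r n : ℕ) : ℕ := ∑ᶠ π : Overpartition n, π.rgap r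

/-- `p̄(n)`: the number of overpartitions of `n`. -/
noncomputable def pbar (n : ℕ) : ℕ := Nat.card (Overpartition n)

/-!
An overpartition with `mex̄ = m` contains each of `1, …, m - 1` as a non-overlined part, and
removing one copy of each is a bijection onto the overpartitions of `n - m(m-1)/2` with no
non-overlined part `m`. Such an overpartition is a pair (partition into distinct parts, partition
not using the part `m`), so its generating function is `(-q;q)_∞ · (1 - q^m) / (q;q)_∞`.
Weighting by `m` and summing over `m` gives `σmex̄`; the factor `(-q;q)_∞ / (q;q)_∞` is a unit,
so it can be pulled out of the infinite sum.
-/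

open PowerSeries

theorem Finset.sum_val_Ico_one (m : ℕ) : (Ico 1 m).val.sum = m * (m - 1) / 2 := by
  rw [sum_val, ← sum_range_id]
  rcases m.eq_zero_or_pos with rfl | hm
  · rfl
  · rw [sum_range_eq_add_Ico _ hm, zero_add]; rfl

namespace Nat.Partition

open Finset

theorem mem_distincts {n : ℕ} {p : n.Partition} : p ∈ distincts n ↔ p.parts.Nodup := by
  simp [distincts]

theorem card_restricted_ne (n m : ℕ) :
    #(restricted n (· ≠ m)) = Nat.card {p : n.Partition // m ∉ p.parts} := by
  rw [Nat.card_eq_fintype_card, Fintype.card_subtype, restricted]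
  congr! 2 with p
  exact ⟨fun h hm ↦ h m hm rfl, fun h i hi him ↦ h (him ▸ hi)⟩

open scoped PowerSeries.WithPiTopology

variable (R : Type*) [TopologicalSpace R] [T2Space R]

theorem powerSeriesMk_card_distincts_eq_tprod [CommSemiring R] :
    PowerSeries.mk (fun n ↦ (#(distincts n) : R)) = ∏' i, (1 + X ^ (i + 1)) := by
  simp_rw [← countRestricted_two, powerSeriesMk_card_countRestricted_eq_tprod R two_pos]
  refine tprod_congr fun i ↦ ?_
  rw [show 2 = 1 + 1 from rfl, sum_range_succ, sum_range_one]
  simp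

theorem powerSeriesMk_card_restricted_ne_mul_tprod [CommRing R] [IsTopologicalRing R] {m : ℕ}
    (hm : 0 < m) :
    PowerSeries.mk (fun n ↦ (#(restricted n (· ≠ m)) : R)) * ∏' i, (1 - X ^ (i + 1)) =
      1 - X ^ m := by
  rw [powerSeriesMk_card_restricted_eq_tprod,
    ← (multipliable_powerSeriesMk_card_restricted R (· ≠ m)).tprod_mul
      (WithPiTopology.multipliable_one_sub_X_pow R)]
  have hfactor (i : ℕ) :
      (if i + 1 ≠ m then ∑' j, (X : R⟦X⟧) ^ ((i + 1) * j) else 1) * (1 - X ^ (i + 1)) =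
        if i = m - 1 then 1 - X ^ m else 1 := by
    by_cases hi : i = m - 1
    · rw [if_neg (by omega), if_pos hi, one_mul, show i + 1 = m by omega]
    · rw [if_pos (by omega), if_neg hi]
      simp_rw [pow_mul]
      exact WithPiTopology.tsum_pow_mul_one_sub_of_constantCoeff_eq_zero (by simp)
  simp_rw [hfactor, tprod_ite_eq]

end Nat.Partition

theorem PowerSeries.WithPiTopology.constantCoeff_tprod_one_sub_X_pow (R : Type*) [CommRing R]
    [TopologicalSpace R] [T2Space R] :
    constantCoeff (∏' i, (1 - X ^ (i + 1) : R⟦X⟧)) = 1 := by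
  rw [(multipliable_one_sub_X_pow R).map_tprod _ (continuous_constantCoeff R)]
  simp

namespace Overpartition

open Finset Nat.Partition

variable {n : ℕ}

@[ext]
theorem ext {π₁ π₂ : Overpartition n} (hparts : π₁.parts = π₂.parts)
    (hoverlined : π₁.overlined = π₂.overlined) : π₁ = π₂ := by
  cases π₁; cases π₂; cases hparts; cases hoverlined; rfl

def equivSigmaDistincts (P : Multiset ℕ → Prop) :
    {π : Overpartition n // P π.parts} ≃
      Σ x : antidiagonal n, distincts x.1.1 × {p : x.1.2.Partition // P p.parts} where
  toFun π := ⟨⟨(π.1.overlined.val.sum, π.1.parts.sum),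
      HasAntidiagonal.mem_antidiagonal.2 <| by
        have := π.1.sum_eq
        simp only [Finset.sum, Multiset.map_id'] at this
        omega⟩,
    ⟨⟨π.1.overlined.val, π.1.overlined_pos _, rfl⟩, mem_distincts.2 π.1.overlined.nodup⟩,
    ⟨⟨π.1.parts, π.1.parts_pos _, rfl⟩, π.2⟩⟩
  invFun s := ⟨
    { parts := s.2.2.1.parts
      overlined := ⟨s.2.1.1.parts, mem_distincts.1 s.2.1.2⟩
      parts_pos := fun _ ↦ s.2.2.1.parts_pos
      overlined_pos := fun _ ↦ s.2.1.1.parts_pos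
      sum_eq := by
        have := HasAntidiagonal.mem_antidiagonal.1 s.1.2
        simp only [Finset.sum, Multiset.map_id', s.2.1.1.parts_sum, s.2.2.1.parts_sum]
        omega }, s.2.2.2⟩
  left_inv π := by ext <;> rfl
  right_inv := by
    rintro ⟨⟨⟨a, b⟩, _⟩, ⟨⟨d, _, hd⟩, _⟩, ⟨⟨p, _, hp⟩, _⟩⟩
    dsimp only at hd hp
    subst hd hp
    rfl

instance : Finite (Overpartition n) :=
  .of_equiv _ ((Equiv.subtypeUnivEquiv fun _ ↦ trivial).symm.trans
    (equivSigmaDistincts fun _ ↦ True)).symm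

theorem card_subtype_parts_eq_sum_antidiagonal (P : Multiset ℕ → Prop) :
    Nat.card {π : Overpartition n // P π.parts} =
      ∑ x ∈ antidiagonal n, #(distincts x.1) * Nat.card {p : x.2.Partition // P p.parts} := by
  rw [Nat.card_congr (equivSigmaDistincts P), Nat.card_sigma]
  simp only [Nat.card_prod, Nat.card_eq_finsetCard]
  exact Finset.sum_coe_sort (antidiagonal n)
    (fun x : ℕ × ℕ ↦ #(distincts x.1) * Nat.card {p : x.2.Partition // P p.parts})

theorem powerSeriesMk_card_subtype_parts (R : Type*) [CommSemiring R] (P : Multiset ℕ → Prop) :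
    PowerSeries.mk (fun n ↦ (Nat.card {π : Overpartition n // P π.parts} : R)) =
      PowerSeries.mk (fun n ↦ (#(distincts n) : R)) *
        PowerSeries.mk (fun n ↦ (Nat.card {p : n.Partition // P p.parts} : R)) := by
  ext n
  simp [coeff_mul, card_subtype_parts_eq_sum_antidiagonal]

theorem exists_pos_notMem_parts (π : Overpartition n) : ∃ m, 0 < m ∧ m ∉ π.parts :=
  ⟨π.parts.sum + 1, Nat.succ_pos _, fun h ↦ by have := Multiset.le_sum_of_mem h; omega⟩

theorem mex_pos (π : Overpartition n) : 0 < π.mex :=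
  (Nat.sInf_mem (exists_pos_notMem_parts π)).1

theorem mex_le (π : Overpartition n) : π.mex ≤ n + 1 :=
  Nat.sInf_le ⟨Nat.succ_pos n, fun h ↦ by
    have := Multiset.le_sum_of_mem h
    have := π.sum_eq
    omega⟩

theorem mex_eq_iff {π : Overpartition n} {m : ℕ} :
    π.mex = m ↔ 0 < m ∧ m ∉ π.parts ∧ ∀ k ∈ Ico 1 m, k ∈ π.parts := by
  constructor
  · rintro rfl
    refine ⟨mex_pos π, (Nat.sInf_mem (exists_pos_notMem_parts π)).2, fun k hk ↦ ?_⟩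
    rw [mem_Ico] at hk
    by_contra h
    exact Nat.notMem_of_lt_sInf hk.2 ⟨hk.1, h⟩
  · rintro ⟨hm, hmem, hlt⟩
    refine le_antisymm (Nat.sInf_le ⟨hm, hmem⟩) (not_lt.1 fun h ↦ ?_)
    exact (Nat.sInf_mem (exists_pos_notMem_parts π)).2 (hlt _ (mem_Ico.2 ⟨mex_pos π, h⟩))

theorem Ico_one_val_le_parts {π : Overpartition n} {m : ℕ} (h : π.mex = m) :
    (Ico 1 m).val ≤ π.parts :=
  (Multiset.le_iff_subset (Ico 1 m).nodup).2 fun _ hk ↦ (mex_eq_iff.1 h).2.2 _ hk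

theorem parts_sum_of_mex_eq {π : Overpartition n} {m : ℕ} (h : π.mex = m) :
    π.parts.sum = (π.parts - (Ico 1 m).val).sum + m * (m - 1) / 2 := by
  rw [← sum_val_Ico_one, ← Multiset.sum_add, tsub_add_cancel_of_le (Ico_one_val_le_parts h)]

/-- Removes one copy of each of the forced parts `1, …, m - 1`. -/
def mexEqEquivNotMem {m : ℕ} (hm : 0 < m) (k : ℕ) :
    {π : Overpartition (k + m * (m - 1) / 2) // π.mex = m} ≃
      {π : Overpartition k // m ∉ π.parts} where
  toFun π := ⟨
    { parts := π.1.parts - (Ico 1 m).val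
      overlined := π.1.overlined
      parts_pos := fun i hi ↦ π.1.parts_pos i (Multiset.mem_of_le (Multiset.sub_le_self _ _) hi)
      overlined_pos := π.1.overlined_pos
      sum_eq := by
        have := parts_sum_of_mex_eq π.2
        have := π.1.sum_eq
        omega },
    fun h ↦ (mex_eq_iff.1 π.2).2.1 (Multiset.mem_of_le (Multiset.sub_le_self _ _) h)⟩
  invFun π := ⟨
    { parts := π.1.parts + (Ico 1 m).val
      overlined := π.1.overlined
      parts_pos := fun i hi ↦ (Multiset.mem_add.1 hi).elim (π.1.parts_pos i) fun h ↦ by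
        have := mem_Ico.1 (mem_def.2 h); omega
      overlined_pos := π.1.overlined_pos
      sum_eq := by
        rw [Multiset.sum_add, sum_val_Ico_one]
        have := π.1.sum_eq
        omega },
    mex_eq_iff.2 ⟨hm, fun h ↦ (Multiset.mem_add.1 h).elim π.2 fun h ↦ by simp at h,
      fun _ hk ↦ Multiset.mem_add.2 (.inr hk)⟩⟩
  left_inv π := by ext <;> simp [tsub_add_cancel_of_le (Ico_one_val_le_parts π.2)]
  right_inv π := by ext <;> simp

theorem isEmpty_mex_eq {m : ℕ} (h : n < m * (m - 1) / 2) :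
    IsEmpty {π : Overpartition n // π.mex = m} :=
  ⟨fun π ↦ by
    have := parts_sum_of_mex_eq π.2
    have := π.1.sum_eq
    omega⟩

theorem powerSeriesMk_card_mex_eq (R : Type*) [CommSemiring R] {m : ℕ} (hm : 0 < m) :
    PowerSeries.mk (fun n ↦ (Nat.card {π : Overpartition n // π.mex = m} : R)) =
      X ^ (m * (m - 1) / 2) *
        PowerSeries.mk (fun n ↦ (Nat.card {π : Overpartition n // m ∉ π.parts} : R)) := by
  ext n
  rw [coeff_X_pow_mul', coeff_mk]
  split_ifs with h
  · obtain ⟨k, rfl⟩ := Nat.exists_eq_add_of_le' h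
    rw [Nat.card_congr (mexEqEquivNotMem hm k), coeff_mk, Nat.add_sub_cancel]
  · have := isEmpty_mex_eq (m := m) (not_le.1 h)
    simp

theorem sigmaMex_eq_sum (n : ℕ) :
    sigmaMex n = ∑ m ∈ range (n + 2), m * Nat.card {π : Overpartition n // π.mex = m} := by
  classical
  have := Fintype.ofFinite (Overpartition n)
  rw [sigmaMex, finsum_eq_sum_of_fintype, ← sum_fiberwise_of_maps_to (g := mex)
    (t := range (n + 2)) fun π _ ↦ mem_range.2 (Nat.lt_succ_of_le (mex_le π))]
  refine sum_congr rfl fun m _ ↦ ?_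
  rw [sum_const_nat fun π hπ ↦ (mem_filter.1 hπ).2, Nat.card_eq_fintype_card,
    Fintype.card_subtype, mul_comm]

open scoped PowerSeries.WithPiTopology

theorem hasSum_powerSeriesMk_sigmaMex (R : Type*) [CommSemiring R] [TopologicalSpace R] :
    HasSum (fun m : ℕ ↦ (m : R⟦X⟧) *
        PowerSeries.mk fun n ↦ (Nat.card {π : Overpartition n // π.mex = m} : R))
      (PowerSeries.mk fun n ↦ (sigmaMex n : R)) := by
  refine (WithPiTopology.hasSum_iff_hasSum_coeff R).2 fun n ↦ ?_
  simp only [← map_natCast (C (R := R)), coeff_C_mul, coeff_mk, sigmaMex_eq_sum, Nat.cast_sum,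
    Nat.cast_mul]
  refine hasSum_sum_of_ne_finset_zero fun m hm ↦ ?_
  have : IsEmpty {π : Overpartition n // π.mex = m} :=
    ⟨fun π ↦ hm (mem_range.2 (π.2 ▸ Nat.lt_succ_of_le (mex_le π.1)))⟩
  simp

variable (K : Type*) [Field K] [TopologicalSpace K] [IsTopologicalRing K] [T2Space K]

theorem powerSeriesMk_card_mex_eq_mul_tprod (m : ℕ) :
    PowerSeries.mk (fun n ↦ (Nat.card {π : Overpartition n // π.mex = m} : K)) =
      X ^ (m * (m - 1) / 2) * (1 - X ^ m) *
        ((∏' i, (1 + X ^ (i + 1))) * (∏' i, (1 - X ^ (i + 1)))⁻¹) := by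
  rcases m.eq_zero_or_pos with rfl | hm
  · have (n : ℕ) : IsEmpty {π : Overpartition n // π.mex = 0} :=
      ⟨fun π ↦ (mex_pos π.1).ne' π.2⟩
    ext n
    simp
  have hrestricted : PowerSeries.mk (fun n ↦ (Nat.card {p : n.Partition // m ∉ p.parts} : K)) =
      (1 - X ^ m) * (∏' i, (1 - X ^ (i + 1)))⁻¹ := by
    rw [PowerSeries.eq_mul_inv_iff_mul_eq
        (by simp [WithPiTopology.constantCoeff_tprod_one_sub_X_pow]),
      ← powerSeriesMk_card_restricted_ne_mul_tprod K hm]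
    simp_rw [card_restricted_ne]
  rw [powerSeriesMk_card_mex_eq K hm, powerSeriesMk_card_subtype_parts K (m ∉ ·),
    powerSeriesMk_card_distincts_eq_tprod, hrestricted]
  ring

theorem powerSeriesMk_sigmaMex_eq_mul_tsum :
    PowerSeries.mk (fun n ↦ (sigmaMex n : K)) =
      ((∏' i, (1 + X ^ (i + 1))) * (∏' i, (1 - X ^ (i + 1)))⁻¹) *
        ∑' m : ℕ, (m : K⟦X⟧) * (X ^ (m * (m - 1) / 2) * (1 - X ^ m)) := by
  set G : K⟦X⟧ := (∏' i, (1 + X ^ (i + 1))) * (∏' i, (1 - X ^ (i + 1)))⁻¹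
  have hG : constantCoeff G ≠ 0 := by
    simp [G, ← powerSeriesMk_card_distincts_eq_tprod,
      WithPiTopology.constantCoeff_tprod_one_sub_X_pow, distincts]
  have hterm (m : ℕ) :
      G⁻¹ * ((m : K⟦X⟧) *
          PowerSeries.mk fun n ↦ (Nat.card {π : Overpartition n // π.mex = m} : K)) =
        (m : K⟦X⟧) * (X ^ (m * (m - 1) / 2) * (1 - X ^ m)) := by
    rw [powerSeriesMk_card_mex_eq_mul_tprod]
    calc G⁻¹ * ((m : K⟦X⟧) * (X ^ (m * (m - 1) / 2) * (1 - X ^ m) * G))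
        = G⁻¹ * G * ((m : K⟦X⟧) * (X ^ (m * (m - 1) / 2) * (1 - X ^ m))) := by ring
      _ = (m : K⟦X⟧) * (X ^ (m * (m - 1) / 2) * (1 - X ^ m)) := by
        rw [PowerSeries.inv_mul_cancel _ hG, one_mul]
  have h := (hasSum_powerSeriesMk_sigmaMex K).mul_left G⁻¹
  simp_rw [hterm] at h
  rw [h.tsum_eq, ← mul_assoc, PowerSeries.mul_inv_cancel _ hG, one_mul]

end Overpartition

open PowerSeries

/-- The number of overpartitions of n with mex̄ = m is the coefficient of z^m qⁿ in
Σ_{m≥1} z^m q^{m(m−1)/2}(1−q^m)·(−q;q)_∞/(q;q)_∞; consequently the generating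
function of σmex̄ is (−q;q)_∞/(q;q)_∞ · Σ_{m≥1} m q^{m(m−1)/2}(1−q^m). -/
theorem stmt19 :
    (∀ n : ℕ, 0 < n → ∀ m : ℕ,
      (Nat.card {π : Overpartition n // π.mex = m} : ℚ)
        = coeff n ((X ^ (m * (m - 1) / 2) * (1 - X ^ m)) *
            ((∏' i : ℕ, (1 + (X : PowerSeries ℚ) ^ (i + 1))) *
              (∏' i : ℕ, (1 - (X : PowerSeries ℚ) ^ (i + 1)))⁻¹))) ∧
    PowerSeries.mk (fun n => (sigmaMex n : ℚ))
      = ((∏' i : ℕ, (1 + (X : PowerSeries ℚ) ^ (i + 1))) *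
          (∏' i : ℕ, (1 - (X : PowerSeries ℚ) ^ (i + 1)))⁻¹) *
          ∑' m : ℕ, (m : PowerSeries ℚ) * (X ^ (m * (m - 1) / 2) * (1 - X ^ m)) := by
  -- The topology on `ℚ⟦X⟧` fixed above is definitionally the one of
  -- `PowerSeries.WithPiTopology`, in which the lemmas are stated.
  refine ⟨fun n _ m ↦ ?_, Overpartition.powerSeriesMk_sigmaMex_eq_mul_tsum ℚ⟩
  have := congrArg (coeff n) (Overpartition.powerSeriesMk_card_mex_eq_mul_tprod ℚ m)
  rw [coeff_mk] at this
  exact this
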